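/- For all n ≥ 2, F_n(x,s,q) - x·F_{n-1}(x,s,q) - s·F_{n-2}(x,s,q) = ∑_{k=1}^{⌊n/2⌋} (-1)^k q^{(k-1)(n-k)} s^k (1 - q^{n-2k}) F_{n-2k}(x,s,q). -/

import Mathlib

open Finset

noncomputable section

abbrev K : Type := RatFunc ℚ

def q : K := RatFunc.X

def qint (a : K) (m : ℕ) : K := ∑ i ∈ range m, a ^ i

def qfact (a : K) (m : ℕ) : K := ∏ i ∈ range m, qint a (i + 1)

def qbinom (a : K) (n k : ℕ) : K :=
  if k ≤ n then qfact a n / (qfact a k * qfact a (n - k)) else 0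

/-- q-Fibonacci polynomials F_n(x,s,q) with base `a`. -/
def qF (a x s : K) : ℕ → K
  | 0 => 0
  | n + 1 => ∑ k ∈ range (n / 2 + 1),
      a ^ (k * (k + 1) / 2) * qbinom a (n - k) k * s ^ k * x ^ (n - 2 * k)

/-- q-Lucas polynomials L_n(x,s,q) with base `a` (L_0 = 2). -/
def qL (a x s : K) (n : ℕ) : K :=
  if n = 0 then 2 else
  ∑ k ∈ range (n / 2 + 1),
    a ^ (k * (k - 1) / 2) * (qint a n / qint a (n - k)) * qbinom a (n - k) k
      * s ^ k * x ^ (n - 2 * k)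

/-- Starred variant: L*_0 = 1, L*_n = L_n for n > 0. -/
def qLs (a x s : K) (n : ℕ) : K := if n = 0 then 1 else qL a x s n

/-- Rogers-Szegő polynomial. -/
def rs (a x y : K) (m : ℕ) : K := ∑ j ∈ range (m + 1), qbinom a m j * x ^ j * y ^ (m - j)

/-- q-Pochhammer (q;q)_m. -/
def qpoch (a : K) (m : ℕ) : K := ∏ j ∈ range m, (1 - a ^ (j + 1))

/-! Write `D n = F n - x F (n-1) - s F (n-2)`. The two q-Pascal rules give
`F (n+2) (x, q s) = x F (n+1) (x, q s) + q^(n+1) s F n (x, s)` and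
`F (n+2) (x, s) = x F (n+1) (x, q s) + q s F n (x, q s)`; eliminating the argument `q s`
leaves `F (n+4) = x F (n+3) + q^(n+2) s (x F (n+1) + s F n)`, that is
`D (n+4) = -s (1 - q^(n+2)) F (n+2) - s q^(n+2) D (n+2)`. Peeling off the `k = 1` term of the
right-hand side and shifting `k` shows that it obeys the same recurrence, and both sides agree
at `n = 2, 3`. -/

section QBinomial

lemma qint_add (a : K) (m n : ℕ) : qint a (m + n) = qint a m + a ^ m * qint a n := by
  simp only [qint, sum_range_add, mul_sum, pow_add]

lemma qfact_succ (a : K) (m : ℕ) : qfact a (m + 1) = qfact a m * qint a (m + 1) :=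
  prod_range_succ _ _

lemma qfact_zero (a : K) : qfact a 0 = 1 :=
  prod_range_zero _

variable {a : K}

lemma qbinom_of_lt {n k : ℕ} (h : n < k) : qbinom a n k = 0 :=
  if_neg h.not_ge

variable (ha : ∀ m, qint a (m + 1) ≠ 0)
include ha

lemma qfact_ne_zero (m : ℕ) : qfact a m ≠ 0 :=
  prod_ne_zero_iff.2 fun i _ => ha i

lemma qbinom_zero_right (n : ℕ) : qbinom a n 0 = 1 := by
  simp [qbinom, qfact_zero, qfact_ne_zero ha]

lemma qbinom_self (n : ℕ) : qbinom a n n = 1 := by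
  simp [qbinom, qfact_zero, qfact_ne_zero ha]

lemma qbinom_succ_succ_mul_qint (m k : ℕ) :
    qbinom a (m + 1) (k + 1) * qint a (k + 1) = qint a (m + 1) * qbinom a m k := by
  rcases le_or_gt k m with hk | hk
  · have := qfact_ne_zero ha
    have := ha k
    simp only [qbinom, if_pos hk, if_pos (Nat.succ_le_succ hk), Nat.add_sub_add_right,
      qfact_succ]
    field_simp
  · simp [qbinom_of_lt hk, qbinom_of_lt (Nat.succ_lt_succ hk)]

lemma qbinom_succ_right_mul_qint (m k : ℕ) :
    qbinom a m (k + 1) * qint a (k + 1) = qint a (m - k) * qbinom a m k := by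
  rcases lt_or_ge k m with hk | hk
  · obtain ⟨d, rfl⟩ := Nat.exists_eq_add_of_lt hk
    have := qfact_ne_zero ha
    have := ha k
    have := ha d
    simp only [qbinom, if_pos (Nat.succ_le_of_lt hk), if_pos hk.le,
      show k + d + 1 - k = d + 1 by omega, show k + d + 1 - (k + 1) = d by omega, qfact_succ]
    field_simp
  · simp [qbinom_of_lt (Nat.lt_succ_of_le hk), Nat.sub_eq_zero_of_le hk, qint]

lemma qbinom_succ_succ {m k : ℕ} (hk : k ≤ m) :
    qbinom a (m + 1) (k + 1) = qbinom a m (k + 1) + a ^ (m - k) * qbinom a m k := by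
  refine mul_right_cancel₀ (ha k) ?_
  have hsplit := qint_add a (m - k) (k + 1)
  rw [show m - k + (k + 1) = m + 1 by omega] at hsplit
  rw [add_mul, qbinom_succ_succ_mul_qint ha, qbinom_succ_right_mul_qint ha, hsplit]
  ring

lemma qbinom_succ_succ' {m k : ℕ} (hk : k ≤ m) :
    qbinom a (m + 1) (k + 1) = a ^ (k + 1) * qbinom a m (k + 1) + qbinom a m k := by
  refine mul_right_cancel₀ (ha k) ?_
  have hsplit := qint_add a (k + 1) (m - k)
  rw [show k + 1 + (m - k) = m + 1 by omega] at hsplit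
  rw [add_mul, mul_assoc, qbinom_succ_succ_mul_qint ha, qbinom_succ_right_mul_qint ha, hsplit]
  ring

end QBinomial

lemma triangle_succ (j : ℕ) : (j + 1) * (j + 1 + 1) / 2 = j * (j + 1) / 2 + (j + 1) := by
  rw [show (j + 1) * (j + 1 + 1) = j * (j + 1) + 2 * (j + 1) by ring,
    Nat.add_mul_div_left _ _ two_pos]

lemma sum_range_succ_eq_add_sum {M : Type*} [AddCommMonoid M] (L X Y : ℕ → M) (N : ℕ)
    (h₀ : L 0 = X 0) (h : ∀ j < N, L (j + 1) = X (j + 1) + Y j) :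
    ∑ k ∈ range (N + 1), L k = ∑ k ∈ range (N + 1), X k + ∑ j ∈ range N, Y j := by
  rw [sum_range_succ', sum_range_succ', h₀, sum_congr rfl fun j hj => h j (mem_range.1 hj),
    sum_add_distrib, add_right_comm]

section QFibonacci

variable {a : K} (x s : K)

lemma qF_succ_eq_sum_range {n M : ℕ} (hM : n / 2 < M) :
    qF a x s (n + 1) =
      ∑ k ∈ range M, a ^ (k * (k + 1) / 2) * qbinom a (n - k) k * s ^ k * x ^ (n - 2 * k) := by
  refine sum_subset (range_subset_range.2 hM) fun k _ hk => ?_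
  rw [qbinom_of_lt (by simp only [mem_range] at hk; omega)]
  ring

lemma mul_qF_succ_eq_sum_range {n M : ℕ} (hM : n / 2 < M) :
    x * qF a x s (n + 1) =
      ∑ k ∈ range M,
        a ^ (k * (k + 1) / 2) * qbinom a (n - k) k * s ^ k * x ^ (n + 1 - 2 * k) := by
  rw [qF_succ_eq_sum_range x s hM, mul_sum]
  refine sum_congr rfl fun k _ => ?_
  rcases le_or_gt (2 * k) n with hk | hk
  · rw [show n + 1 - 2 * k = n - 2 * k + 1 by omega, pow_succ]
    ring
  · rw [qbinom_of_lt (by omega)]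
    ring

variable (ha : ∀ m, qint a (m + 1) ≠ 0)
include ha

lemma qF_one : qF a x s 1 = 1 := by
  simp [qF, qbinom_zero_right ha]

lemma qF_two : qF a x s 2 = x := by
  simp [qF, qbinom_zero_right ha]

lemma qF_three : qF a x s 3 = x ^ 2 + a * s := by
  simp [qF, sum_range_succ, qbinom_zero_right ha, qbinom_self ha]

lemma qF_mul_add_two (n : ℕ) :
    qF a x (a * s) (n + 2) = x * qF a x (a * s) (n + 1) + a ^ (n + 1) * s * qF a x s n := by
  rcases n with _ | p
  · simp [qF, qbinom_zero_right ha]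
  show qF a x (a * s) (p + 2 + 1)
    = x * qF a x (a * s) (p + 1 + 1) + a ^ (p + 2) * s * qF a x s (p + 1)
  rw [qF_succ_eq_sum_range (M := p / 2 + 1 + 1) _ _ (by omega),
    mul_qF_succ_eq_sum_range (M := p / 2 + 1 + 1) _ _ (by omega),
    qF_succ_eq_sum_range (M := p / 2 + 1) _ _ (by omega), mul_sum]
  refine sum_range_succ_eq_add_sum _ _ _ _ (by simp [qbinom_zero_right ha]) fun j hj => ?_
  rw [show p + 2 - (j + 1) = p - j + 1 by omega, show p + 1 - (j + 1) = p - j by omega,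
    show p + 2 - 2 * (j + 1) = p - 2 * j by omega,
    qbinom_succ_succ ha (by omega), show p - j - j = p - 2 * j by omega, triangle_succ, mul_pow]
  have hexp : a ^ (j * (j + 1) / 2 + (j + 1)) * a ^ (p - 2 * j) * a ^ (j + 1)
      = a ^ (p + 2) * a ^ (j * (j + 1) / 2) := by
    rw [← pow_add, ← pow_add, ← pow_add]
    congr 1
    omega
  linear_combination (qbinom a (p - j) j * s ^ (j + 1) * x ^ (p - 2 * j)) * hexp

lemma qF_add_two (n : ℕ) :
    qF a x s (n + 2) = x * qF a x (a * s) (n + 1) + a * s * qF a x (a * s) n := by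
  rcases n with _ | p
  · simp [qF, qbinom_zero_right ha]
  show qF a x s (p + 2 + 1) = x * qF a x (a * s) (p + 1 + 1) + a * s * qF a x (a * s) (p + 1)
  rw [qF_succ_eq_sum_range (M := p / 2 + 1 + 1) _ _ (by omega),
    mul_qF_succ_eq_sum_range (M := p / 2 + 1 + 1) _ _ (by omega),
    qF_succ_eq_sum_range (M := p / 2 + 1) _ _ (by omega), mul_sum]
  refine sum_range_succ_eq_add_sum _ _ _ _ (by simp [qbinom_zero_right ha]) fun j hj => ?_
  rw [show p + 2 - (j + 1) = p - j + 1 by omega, show p + 1 - (j + 1) = p - j by omega,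
    show p + 2 - 2 * (j + 1) = p - 2 * j by omega,
    qbinom_succ_succ' ha (by omega), triangle_succ, mul_pow, mul_pow, pow_add]
  ring

lemma qF_add_four (ha₀ : a ≠ 0) (m : ℕ) :
    qF a x s (m + 4) =
      x * qF a x s (m + 3) + a ^ (m + 2) * s * (x * qF a x s (m + 1) + s * qF a x s m) := by
  obtain ⟨t, rfl⟩ : ∃ t, s = a * t := ⟨a⁻¹ * s, by field_simp⟩
  have h₁ := qF_mul_add_two x t ha (m + 2)
  have h₂ := qF_add_two x t ha m
  rw [h₁, h₂]
  ring

end QFibonacci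

lemma sum_Icc_one_eq_sum_range {M : Type*} [AddCommMonoid M] (f : ℕ → M) (N : ℕ) :
    ∑ k ∈ Icc 1 N, f k = ∑ k ∈ range N, f (k + 1) := by
  rw [← Ico_add_one_right_eq_Icc, sum_Ico_eq_sum_range, Nat.add_sub_cancel]
  simp only [add_comm 1]

def qFibCorrection {R : Type*} [CommRing R] (a s : R) (F : ℕ → R) (n : ℕ) : R :=
  ∑ k ∈ Icc 1 (n / 2), (-1) ^ k * a ^ ((k - 1) * (n - k)) * s ^ k * (1 - a ^ (n - 2 * k))
    * F (n - 2 * k)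

lemma qFibCorrection_add_two {R : Type*} [CommRing R] (a s : R) (F : ℕ → R) (n : ℕ) :
    qFibCorrection a s F (n + 2)
      = -(s * (1 - a ^ n) * F n) - s * a ^ n * qFibCorrection a s F n := by
  rw [qFibCorrection, qFibCorrection, show (n + 2) / 2 = n / 2 + 1 by omega,
    sum_Icc_one_eq_sum_range, sum_Icc_one_eq_sum_range, sum_range_succ', mul_sum,
    sub_eq_add_neg (-(s * (1 - a ^ n) * F n)), ← sum_neg_distrib, add_comm]
  congr 1
  · simp
  · refine sum_congr rfl fun j hj => ?_
    obtain ⟨d, rfl⟩ : ∃ d, n = 2 * (j + 1) + d :=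
      ⟨n - 2 * (j + 1), by have := mem_range.1 hj; omega⟩
    have hexp : (j + 1 + 1 - 1) * (2 * (j + 1) + d + 2 - (j + 1 + 1))
        = 2 * (j + 1) + d + (j + 1 - 1) * (2 * (j + 1) + d - (j + 1)) := by
      rw [show 2 * (j + 1) + d + 2 - (j + 1 + 1) = j + 2 + d by omega,
        show 2 * (j + 1) + d - (j + 1) = j + 1 + d by omega]
      simp only [Nat.add_sub_cancel]
      ring
    rw [hexp, show 2 * (j + 1) + d + 2 - 2 * (j + 1 + 1) = 2 * (j + 1) + d - 2 * (j + 1) by omega,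
      pow_add]
    ring

theorem qF_sub_sub_eq_qFibCorrection {a : K} (ha₀ : a ≠ 0) (ha : ∀ m, qint a (m + 1) ≠ 0)
    (x s : K) (n : ℕ) (hn : 2 ≤ n) :
    qF a x s n - x * qF a x s (n - 1) - s * qF a x s (n - 2) = qFibCorrection a s (qF a x s) n := by
  obtain ⟨m, rfl⟩ := Nat.exists_eq_add_of_le' hn
  simp only [Nat.add_sub_cancel, show m + 2 - 1 = m + 1 by omega]
  clear hn
  induction m using Nat.twoStepInduction with
  | zero => simp [qF, qFibCorrection, qbinom_zero_right ha]
  | one =>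
    have hcorr : qFibCorrection a s (qF a x s) 3 = -(s * (1 - a)) := by
      simp [qFibCorrection, qF_one x s ha]
    rw [hcorr, qF_three x s ha, qF_two x s ha, qF_one x s ha]
    ring
  | more m ih _ =>
    rw [qFibCorrection_add_two, ← ih, show m + 2 + 2 = m + 4 from rfl, qF_add_four x s ha ha₀]
    ring

lemma q_ne_zero : q ≠ 0 :=
  RatFunc.X_ne_zero

lemma qint_q_ne_zero (m : ℕ) : qint q (m + 1) ≠ 0 := by
  have hpoly : (∑ i ∈ range (m + 1), Polynomial.X ^ i : Polynomial ℚ) ≠ 0 := fun h =>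
    Nat.cast_add_one_ne_zero (R := ℚ) m (by simpa using congrArg (Polynomial.eval 1) h)
  simpa [qint, q, ← RatFunc.algebraMap_X] using
    (map_ne_zero_iff _ (RatFunc.algebraMap_injective ℚ)).2 hpoly

theorem stmt6 (x s : K) (n : ℕ) (hn : 2 ≤ n) :
    qF q x s n - x * qF q x s (n - 1) - s * qF q x s (n - 2)
      = ∑ k ∈ Icc 1 (n / 2), (-1 : K) ^ k * q ^ ((k - 1) * (n - k)) * s ^ k
          * (1 - q ^ (n - 2 * k)) * qF q x s (n - 2 * k) :=
  qF_sub_sub_eq_qFibCorrection q_ne_zero qint_q_ne_zero x s n hn
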